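/- There exists a constant C, depending only on β, 𝗋, 𝗉, m₋, m₊ and m̄, such that for every N ≥ 2, every mass configuration with m₋ ≤ m_x ≤ m₊, every s ≥ 0 and all indices 1 ≤ x ≤ x' ≤ N: |r̄_{x'}(s) − r̄_x(s)| ≤ C (|x'−x|/N)^{1/2} (for x, x' ≤ N−1), |p̄_{x'}(s)/m_{x'} − p̄_x(s)/m_x| ≤ C (|x'−x|/N)^{1/2}, and moreover |r̄_x(s)| ≤ C and |p̄_x(s)| ≤ C for all x. -/

import Mathlib

open Finset

/-- The disordered harmonic chain dynamics on `{1,…,N}`: `r` has components `1 ≤ x ≤ N-1`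
(with the convention `r_0 = r_N = 0`) and `p` has components `1 ≤ x ≤ N`. -/
def IsChainSolution (N : ℕ) (m : ℕ → ℝ) (r p : ℝ → ℕ → ℝ) : Prop :=
  (∀ t : ℝ, r t 0 = 0) ∧ (∀ t : ℝ, r t N = 0) ∧
  (∀ (t : ℝ) (x : ℕ), 1 ≤ x → x ≤ N - 1 →
    HasDerivAt (fun s => r s x) (p t (x + 1) / m (x + 1) - p t x / m x) t) ∧
  (∀ (t : ℝ) (x : ℕ), 1 ≤ x → x ≤ N →
    HasDerivAt (fun s => p s x) (r t x - r t (x - 1)) t)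

/-!
The discrete gradients `(∇(p/m), ∇r)` of a solution solve the chain equations again, with
the roles of `r` and `p` exchanged, so their energy `∑ (∇r)² / m + ∑ (∇(p/m))²` is conserved.
For `C¹` initial profiles this energy is `O(1/N)`, and Cauchy–Schwarz along a segment
`[x, x']` turns it into the Hölder-1/2 bounds. The bound on `r` then follows from `r₀ = 0`,
and the bound on `p` from conservation of the total momentum `∑ m_x (p_x / m_x)`: it pins a
weighted mean of the velocities, whose oscillation is already bounded.
-/

open scoped NNReal

namespace HarmonicChain

/-- The term `r 0 ^ 2` vanishes on chain configurations; pairing `p (x + 1)` with `r x` makes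
the energy flux telescope. -/
noncomputable def chainEnergy (N : ℕ) (m r p : ℕ → ℝ) : ℝ :=
  ∑ x ∈ range N, (p (x + 1) ^ 2 / m (x + 1) + r x ^ 2)

def stretchGrad (r : ℕ → ℝ) (x : ℕ) : ℝ := r x - r (x - 1)

noncomputable def velocityGrad (N : ℕ) (m p : ℕ → ℝ) (x : ℕ) : ℝ :=
  if 1 ≤ x ∧ x ≤ N - 1 then p (x + 1) / m (x + 1) - p x / m x else 0

end HarmonicChain

open HarmonicChain

namespace IsChainSolution

variable {N : ℕ} {m : ℕ → ℝ} {r p : ℝ → ℕ → ℝ}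

theorem hasDerivAt_r (h : IsChainSolution N m r p) (t : ℝ) {x : ℕ} (hx : x ≤ N) :
    HasDerivAt (fun s => r s x) (velocityGrad N m (p t) x) t := by
  by_cases hint : 1 ≤ x ∧ x ≤ N - 1
  · rw [velocityGrad, if_pos hint]
    exact h.2.2.1 t x hint.1 hint.2
  · have hbdry : ∀ s, r s x = 0 := by
      obtain rfl | rfl : x = 0 ∨ x = N := by omega
      exacts [h.1, h.2.1]
    rw [velocityGrad, if_neg hint, show (fun s => r s x) = fun _ => 0 from funext hbdry]
    exact hasDerivAt_const t 0

theorem hasDerivAt_sq_r (h : IsChainSolution N m r p) (t : ℝ) {x : ℕ} (hx : x < N) :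
    HasDerivAt (fun s => r s x ^ 2)
      (2 * (r t x * (p t (x + 1) / m (x + 1))) - 2 * (r t x * (p t x / m x))) t := by
  refine ((h.hasDerivAt_r t hx.le).fun_pow 2).congr_deriv ?_
  by_cases hx0 : x = 0
  · simp [hx0, h.1]
  · rw [velocityGrad, if_pos ⟨by omega, by omega⟩]
    ring

theorem chainEnergy_eq (h : IsChainSolution N m r p) (s t : ℝ) :
    chainEnergy N m (r s) (p s) = chainEnergy N m (r t) (p t) := by
  have hderiv : ∀ t, HasDerivAt (fun s => chainEnergy N m (r s) (p s)) 0 t := by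
    intro t
    have hterm : ∀ x ∈ range N, HasDerivAt (fun s => p s (x + 1) ^ 2 / m (x + 1) + r s x ^ 2)
        (2 * (r t (x + 1) * (p t (x + 1) / m (x + 1))) - 2 * (r t x * (p t x / m x))) t := by
      intro x hx
      have hx := mem_range.1 hx
      refine ((((h.2.2.2 t (x + 1) (by omega) (by omega)).fun_pow 2).div_const
        (m (x + 1))).add (h.hasDerivAt_sq_r t hx)).congr_deriv ?_
      rw [Nat.add_sub_cancel]
      ring
    have hsum := HasDerivAt.fun_sum hterm
    rw [sum_range_sub (fun x => 2 * (r t x * (p t x / m x))), h.1, h.2.1] at hsum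
    simp only [zero_mul, mul_zero, sub_self] at hsum
    exact hsum
  exact is_const_of_deriv_eq_zero (fun t => (hderiv t).differentiableAt)
    (fun t => (hderiv t).deriv) s t

theorem sum_p_eq (h : IsChainSolution N m r p) (s t : ℝ) :
    ∑ x ∈ range N, p s (x + 1) = ∑ x ∈ range N, p t (x + 1) := by
  have hderiv : ∀ t, HasDerivAt (fun s => ∑ x ∈ range N, p s (x + 1)) 0 t := by
    intro t
    have hsum := HasDerivAt.fun_sum fun x (hx : x ∈ range N) =>
      h.2.2.2 t (x + 1) (by omega) (by have := mem_range.1 hx; omega)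
    simp only [Nat.add_sub_cancel] at hsum
    rwa [sum_range_sub (fun x => r t x), h.1, h.2.1, sub_self] at hsum
  exact is_const_of_deriv_eq_zero (fun t => (hderiv t).differentiableAt)
    (fun t => (hderiv t).deriv) s t

theorem gradient (h : IsChainSolution N m r p) :
    IsChainSolution N m (fun t => velocityGrad N m (p t)) (fun t => stretchGrad (r t)) := by
  refine ⟨fun t => if_neg (by omega), fun t => if_neg (by omega), fun t x hx1 hxN => ?_,
    fun t x hx1 hxN => (h.hasDerivAt_r t hxN).sub (h.hasDerivAt_r t (by omega))⟩
  have hv : ∀ y, 1 ≤ y → y ≤ N →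
      HasDerivAt (fun s => p s y / m y) (stretchGrad (r t) y / m y) t :=
    fun y hy1 hyN => (h.2.2.2 t y hy1 hyN).div_const (m y)
  simp only [velocityGrad, if_pos (And.intro hx1 hxN)]
  exact (hv (x + 1) (by omega) (by omega)).sub (hv x hx1 (by omega))

end IsChainSolution

theorem abs_sub_le_of_sum_sq_sub_le (g : ℕ → ℝ) {x x' N : ℕ} {K : ℝ} (hxx' : x ≤ x')
    (hsum : ∑ y ∈ Ico x x', (g (y + 1) - g y) ^ 2 ≤ K / N) :
    |g x' - g x| ≤ √K * √(((x' : ℝ) - x) / N) := by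
  have hlen : (0 : ℝ) ≤ (x' : ℝ) - x := sub_nonneg.2 (by exact_mod_cast hxx')
  rw [← Real.sqrt_mul' _ (div_nonneg hlen N.cast_nonneg)]
  refine Real.abs_le_sqrt ?_
  calc (g x' - g x) ^ 2 = (∑ y ∈ Ico x x', (g (y + 1) - g y)) ^ 2 := by
        rw [sum_Ico_sub (fun y => g y) hxx']
    _ ≤ #(Ico x x') * ∑ y ∈ Ico x x', (g (y + 1) - g y) ^ 2 := sq_sum_le_card_mul_sum_sq
    _ ≤ ((x' : ℝ) - x) * (K / N) := by
      rw [Nat.card_Ico, Nat.cast_sub hxx']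
      exact mul_le_mul_of_nonneg_left hsum hlen
    _ = K * (((x' : ℝ) - x) / N) := by ring

theorem sqrt_sub_div_le_one {x x' N : ℕ} (hx'N : x' ≤ N) : √(((x' : ℝ) - x) / N) ≤ 1 := by
  rcases N.eq_zero_or_pos with rfl | hN
  · simp
  refine Real.sqrt_le_one.2 ((div_le_one (by exact_mod_cast hN)).2 ?_)
  have : (x' : ℝ) ≤ N := by exact_mod_cast hx'N
  linarith [x.cast_nonneg (α := ℝ)]

theorem abs_le_of_abs_sum_mul_le {ι : Type*} {s : Finset ι} {w q : ι → ℝ} {a b P δ : ℝ}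
    (ha : 0 < a) (hw : ∀ j ∈ s, a ≤ w j ∧ w j ≤ b)
    (hq : ∀ i ∈ s, ∀ j ∈ s, |q i - q j| ≤ δ)
    (hP : |∑ j ∈ s, w j * q j| ≤ #s * P) {i : ι} (hi : i ∈ s) :
    |q i| ≤ (P + b * δ) / a := by
  have hs : (0 : ℝ) < #s := by exact_mod_cast card_pos.2 ⟨i, hi⟩
  have hspread : |∑ j ∈ s, w j * (q i - q j)| ≤ #s * (b * δ) := by
    refine (abs_sum_le_sum_abs _ _).trans ?_
    rw [← nsmul_eq_mul]
    refine sum_le_card_nsmul _ _ _ fun j hj => ?_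
    rw [abs_mul, abs_of_pos (ha.trans_le (hw j hj).1)]
    exact mul_le_mul (hw j hj).2 (hq i hi j hj) (abs_nonneg _)
      (ha.le.trans ((hw j hj).1.trans (hw j hj).2))
  have hmass : #s * a ≤ ∑ j ∈ s, w j := by
    rw [← nsmul_eq_mul]
    exact card_nsmul_le_sum _ _ _ fun j hj => (hw j hj).1
  rw [le_div_iff₀ ha, ← mul_le_mul_iff_of_pos_left hs]
  calc #s * (|q i| * a) = #s * a * |q i| := by ring
    _ ≤ (∑ j ∈ s, w j) * |q i| := mul_le_mul_of_nonneg_right hmass (abs_nonneg _)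
    _ = |(∑ j ∈ s, w j) * q i| := by
      rw [abs_mul, abs_of_nonneg ((mul_nonneg hs.le ha.le).trans hmass)]
    _ = |∑ j ∈ s, w j * q j + ∑ j ∈ s, w j * (q i - q j)| := by
      rw [← sum_add_distrib, sum_mul]
      exact congrArg _ (sum_congr rfl fun j _ => by ring)
    _ ≤ #s * P + #s * (b * δ) := (abs_add_le _ _).trans (add_le_add hP hspread)
    _ = #s * (P + b * δ) := by ring

theorem LipschitzOnWith.abs_sub_le_div {f : ℝ → ℝ} {K : ℝ≥0}
    (hf : LipschitzOnWith K f (Set.Icc 0 1)) {N x : ℕ} (hx : x < N) :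
    |f (((x + 1 : ℕ) : ℝ) / N) - f (x / N)| ≤ K / N := by
  have hN : (0 : ℝ) < N := by exact_mod_cast hx.trans_le' (Nat.zero_le x)
  have hmem : ∀ y : ℕ, y ≤ N → (y : ℝ) / N ∈ Set.Icc (0 : ℝ) 1 := fun y hy =>
    unitInterval.div_mem y.cast_nonneg N.cast_nonneg (by exact_mod_cast hy)
  have h := hf.dist_le_mul _ (hmem (x + 1) hx) _ (hmem x hx.le)
  rw [Nat.cast_succ] at h ⊢
  rwa [Real.dist_eq, Real.dist_eq, ← sub_div, add_sub_cancel_left,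
    abs_of_pos (one_div_pos.2 hN), mul_one_div] at h

namespace HarmonicChain

variable {N : ℕ} {m : ℕ → ℝ}

theorem abs_sub_le_of_chainEnergy_grad_le {M K : ℝ} (hm : ∀ x, 0 < m x ∧ m x ≤ M)
    {r p : ℕ → ℝ} (hE : chainEnergy N m (velocityGrad N m p) (stretchGrad r) ≤ K / N)
    {x x' : ℕ} (hxx' : x ≤ x') (hx'N : x' ≤ N) :
    |r x' - r x| ≤ √(M * K) * √(((x' : ℝ) - x) / N) := by
  have hM : 0 ≤ M := (hm 0).1.le.trans (hm 0).2
  refine abs_sub_le_of_sum_sq_sub_le r hxx' ?_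
  rw [mul_div_assoc]
  refine le_trans ?_ (mul_le_mul_of_nonneg_left hE hM)
  rw [chainEnergy, mul_sum]
  refine (sum_le_sum_of_subset_of_nonneg (fun y hy => ?_) fun _ _ _ => sq_nonneg _).trans
    (sum_le_sum fun y _ => ?_)
  · rw [mem_Ico] at hy
    exact mem_range.2 (by omega)
  obtain ⟨hmy, hmyM⟩ := hm (y + 1)
  rw [stretchGrad, Nat.add_sub_cancel]
  calc (r (y + 1) - r y) ^ 2 = m (y + 1) * ((r (y + 1) - r y) ^ 2 / m (y + 1)) := by
        field_simp
    _ ≤ M * ((r (y + 1) - r y) ^ 2 / m (y + 1)) :=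
        mul_le_mul_of_nonneg_right hmyM (by positivity)
    _ ≤ M * ((r (y + 1) - r y) ^ 2 / m (y + 1) + velocityGrad N m p y ^ 2) :=
        mul_le_mul_of_nonneg_left (le_add_of_nonneg_right (sq_nonneg _)) hM

theorem abs_velocity_sub_le_of_chainEnergy_grad_le {K : ℝ} (hm : ∀ x, 0 ≤ m x)
    {r p : ℕ → ℝ}
    (hE : chainEnergy N m (velocityGrad N m p) (stretchGrad r) ≤ K / N)
    {x x' : ℕ} (hx1 : 1 ≤ x) (hxx' : x ≤ x') (hx'N : x' ≤ N) :
    |p x' / m x' - p x / m x| ≤ √K * √(((x' : ℝ) - x) / N) := by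
  refine abs_sub_le_of_sum_sq_sub_le (fun y => p y / m y) hxx' (le_trans ?_ hE)
  calc _ = ∑ y ∈ Ico x x', velocityGrad N m p y ^ 2 := sum_congr rfl fun y hy => by
          rw [mem_Ico] at hy
          rw [velocityGrad, if_pos ⟨by omega, by omega⟩]
    _ ≤ ∑ y ∈ range N, velocityGrad N m p y ^ 2 :=
        sum_le_sum_of_subset_of_nonneg (fun y hy => by
          rw [mem_Ico] at hy
          exact mem_range.2 (by omega)) fun _ _ _ => sq_nonneg _
    _ ≤ _ := sum_le_sum fun y _ => le_add_of_nonneg_left (div_nonneg (sq_nonneg _) (hm _))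

theorem chainEnergy_le {a P R : ℝ} (ha : 0 < a) (hm : ∀ x, a ≤ m x) {r p : ℕ → ℝ}
    (hp : ∀ x < N, |p (x + 1)| ≤ P) (hr : ∀ x < N, |r x| ≤ R) :
    chainEnergy N m r p ≤ N * (P ^ 2 / a + R ^ 2) := by
  rw [chainEnergy, ← nsmul_eq_mul]
  refine (sum_le_card_nsmul _ _ _ fun x hx => ?_).trans_eq (by rw [card_range])
  have hpx := abs_le.1 (hp x (mem_range.1 hx))
  have hrx := abs_le.1 (hr x (mem_range.1 hx))
  exact add_le_add (div_le_div₀ (sq_nonneg _) (sq_le_sq' hpx.1 hpx.2) ha (hm _))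
    (sq_le_sq' hrx.1 hrx.2)

theorem chainEnergy_grad_le_of_lipschitzOnWith {rr pp : ℝ → ℝ} {Kr Kp : ℝ≥0}
    (hrr : LipschitzOnWith Kr rr (Set.Icc 0 1)) (hpp : LipschitzOnWith Kp pp (Set.Icc 0 1))
    {mminus mbar : ℝ} (hm0 : 0 < mminus) (hm : ∀ x, mminus ≤ m x) (hmb : 0 < mbar)
    (hN : N ≠ 0) {r p : ℕ → ℝ} (hr : ∀ x ≤ N, r x = rr (x / N))
    (hv : ∀ x, 1 ≤ x → x ≤ N → p x / m x = pp (x / N) / mbar) :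
    chainEnergy N m (velocityGrad N m p) (stretchGrad r) ≤
      ((Kr : ℝ) ^ 2 / mminus + (Kp : ℝ) ^ 2 / mbar ^ 2) / N := by
  have hη : ∀ x < N, |stretchGrad r (x + 1)| ≤ Kr / N := fun x hx => by
    rw [stretchGrad, Nat.add_sub_cancel, hr (x + 1) hx, hr x hx.le]
    exact hrr.abs_sub_le_div hx
  have hξ : ∀ x < N, |velocityGrad N m p x| ≤ Kp / N / mbar := fun x hx => by
    rw [velocityGrad]
    split_ifs with hint
    · rw [hv (x + 1) (by omega) (by omega), hv x hint.1 hx.le, ← sub_div, abs_div,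
        abs_of_pos hmb]
      exact div_le_div_of_nonneg_right (hpp.abs_sub_le_div hx) hmb.le
    · rw [abs_zero]
      positivity
  refine (chainEnergy_le hm0 hm hη hξ).trans_eq ?_
  field_simp

theorem abs_le_of_abs_sum_le_of_velocity_sub_le {a b P δ : ℝ} (ha : 0 < a)
    (hm : ∀ x, m x ∈ Set.Icc a b) {p : ℕ → ℝ}
    (hosc : ∀ x x', 1 ≤ x → x ≤ x' → x' ≤ N → |p x' / m x' - p x / m x| ≤ δ)
    (hsum : |∑ x ∈ range N, p (x + 1)| ≤ N * P) {x : ℕ} (hx1 : 1 ≤ x) (hxN : x ≤ N) :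
    |p x| ≤ b * ((P + b * δ) / a) := by
  have hmpos : ∀ x, 0 < m x := fun x => ha.trans_le (hm x).1
  have hv : |p x / m x| ≤ (P + b * δ) / a := by
    obtain ⟨y, rfl⟩ : ∃ y, x = y + 1 := ⟨x - 1, by omega⟩
    refine abs_le_of_abs_sum_mul_le (s := range N) (w := fun y => m (y + 1))
      (q := fun y => p (y + 1) / m (y + 1)) ha (fun j _ => hm (j + 1)) (fun i hi j hj => ?_) ?_
      (mem_range.2 (by omega))
    · rw [mem_range] at hi hj
      rcases le_total i j with hij | hji
      · rw [abs_sub_comm]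
        exact hosc (i + 1) (j + 1) (by omega) (by omega) (by omega)
      · exact hosc (j + 1) (i + 1) (by omega) (by omega) (by omega)
    · simpa only [card_range, mul_div_cancel₀ _ (hmpos _).ne'] using hsum
  calc |p x| = m x * |p x / m x| := by
        rw [abs_div, abs_of_pos (hmpos x), mul_div_cancel₀ _ (hmpos x).ne']
    _ ≤ b * ((P + b * δ) / a) :=
        mul_le_mul (hm x).2 hv (abs_nonneg _) ((hmpos x).le.trans (hm x).2)

end HarmonicChain

namespace IsChainSolution

variable {N : ℕ} {m : ℕ → ℝ} {r p : ℝ → ℕ → ℝ}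

theorem chainEnergy_grad_le (h : IsChainSolution N m r p) {rr pp : ℝ → ℝ} {Kr Kp : ℝ≥0}
    (hrr : LipschitzOnWith Kr rr (Set.Icc 0 1)) (hpp : LipschitzOnWith Kp pp (Set.Icc 0 1))
    (hrr0 : rr 0 = 0) (hrr1 : rr 1 = 0) {mminus mbar : ℝ} (hm0 : 0 < mminus)
    (hm : ∀ x, mminus ≤ m x) (hmb : 0 < mbar) (hN : N ≠ 0)
    (hr0 : ∀ x : ℕ, 1 ≤ x → x ≤ N - 1 → r 0 x = rr ((x : ℝ) / N))
    (hp0 : ∀ x : ℕ, 1 ≤ x → x ≤ N → p 0 x = m x * pp ((x : ℝ) / N) / mbar) (s : ℝ) :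
    chainEnergy N m (velocityGrad N m (p s)) (stretchGrad (r s)) ≤
      ((Kr : ℝ) ^ 2 / mminus + (Kp : ℝ) ^ 2 / mbar ^ 2) / N := by
  have hr0' : ∀ x ≤ N, r 0 x = rr (x / N) := by
    intro x hxN
    obtain rfl | hx0 := Nat.eq_zero_or_pos x
    · simp [h.1, hrr0]
    obtain rfl | hxN := hxN.eq_or_lt
    · simp [h.2.1, hrr1, hN]
    exact hr0 x hx0 (by omega)
  have hv0 : ∀ x, 1 ≤ x → x ≤ N → p 0 x / m x = pp (x / N) / mbar := fun x hx1 hxN => by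
    rw [hp0 x hx1 hxN, mul_div_assoc,
      mul_div_cancel_left₀ _ (hm0.trans_le (hm x)).ne']
  rw [h.gradient.chainEnergy_eq s 0]
  exact chainEnergy_grad_le_of_lipschitzOnWith hrr hpp hm0 hm hmb hN hr0' hv0

theorem abs_sum_p_le (h : IsChainSolution N m r p) {pp : ℝ → ℝ} {mplus mbar Mp : ℝ}
    (hm : ∀ x, 0 < m x ∧ m x ≤ mplus) (hmb : 0 < mbar)
    (hpp : ∀ y ∈ Set.Icc (0 : ℝ) 1, ‖pp y‖ ≤ Mp)
    (hp0 : ∀ x : ℕ, 1 ≤ x → x ≤ N → p 0 x = m x * pp ((x : ℝ) / N) / mbar) (s : ℝ) :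
    |∑ x ∈ range N, p s (x + 1)| ≤ N * (mplus * Mp / mbar) := by
  rw [h.sum_p_eq s 0]
  calc |∑ x ∈ range N, p 0 (x + 1)| ≤ ∑ x ∈ range N, |p 0 (x + 1)| :=
        abs_sum_le_sum_abs _ _
    _ ≤ #(range N) • (mplus * Mp / mbar) := sum_le_card_nsmul _ _ _ fun x hx => ?_
    _ = N * (mplus * Mp / mbar) := by rw [card_range, nsmul_eq_mul]
  have hx := mem_range.1 hx
  rw [hp0 (x + 1) (by omega) (by omega), abs_div, abs_mul, abs_of_pos (hm _).1,
    abs_of_pos hmb, ← Real.norm_eq_abs]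
  have hgrid := unitInterval.div_mem (Nat.cast_nonneg (x + 1)) N.cast_nonneg
    (by exact_mod_cast hx : ((x + 1 : ℕ) : ℝ) ≤ N)
  exact div_le_div_of_nonneg_right (mul_le_mul (hm _).2 (hpp _ hgrid) (norm_nonneg _)
    ((hm 0).1.le.trans (hm 0).2)) hmb.le

end IsChainSolution

theorem stmt2_general (rr pp : ℝ → ℝ)
    (hrrc : ContDiffOn ℝ 1 rr (Set.Icc 0 1)) (hrr0 : rr 0 = 0) (hrr1 : rr 1 = 0)
    (hppc : ContDiffOn ℝ 1 pp (Set.Icc 0 1))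
    (mminus mplus mbar : ℝ) (hm0 : 0 < mminus) (hmb : 0 < mbar) :
    ∃ C : ℝ, ∀ N : ℕ, 2 ≤ N → ∀ m : ℕ → ℝ,
      (∀ x : ℕ, m x ∈ Set.Icc mminus mplus) →
      ∀ r p : ℝ → ℕ → ℝ, IsChainSolution N m r p →
      (∀ x : ℕ, 1 ≤ x → x ≤ N - 1 → r 0 x = rr ((x : ℝ) / N)) →
      (∀ x : ℕ, 1 ≤ x → x ≤ N → p 0 x = m x * pp ((x : ℝ) / N) / mbar) →
      ∀ s : ℝ, 0 ≤ s →
        (∀ x x' : ℕ, 1 ≤ x → x ≤ x' → x' ≤ N →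
          ((x' ≤ N - 1 →
            |r s x' - r s x| ≤ C * Real.sqrt (((x' : ℝ) - (x : ℝ)) / N)) ∧
           |p s x' / m x' - p s x / m x| ≤ C * Real.sqrt (((x' : ℝ) - (x : ℝ)) / N))) ∧
        (∀ x : ℕ, 1 ≤ x → x ≤ N → |r s x| ≤ C ∧ |p s x| ≤ C) := by
  obtain ⟨Kr, hKr⟩ := hrrc.exists_lipschitzOnWith one_ne_zero (convex_Icc 0 1) isCompact_Icc
  obtain ⟨Kp, hKp⟩ := hppc.exists_lipschitzOnWith one_ne_zero (convex_Icc 0 1) isCompact_Icc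
  obtain ⟨Mp, hMp⟩ := isCompact_Icc.exists_bound_of_continuousOn hppc.continuousOn
  set C₀ : ℝ := (Kr : ℝ) ^ 2 / mminus + (Kp : ℝ) ^ 2 / mbar ^ 2
  set Cp : ℝ := mplus * ((mplus * Mp / mbar + mplus * √C₀) / mminus)
  refine ⟨max (max √(mplus * C₀) √C₀) Cp, fun N hN m hm r p hsol hr0 hp0 s _ => ?_⟩
  have hm' : ∀ x, 0 < m x ∧ m x ≤ mplus := fun x => ⟨hm0.trans_le (hm x).1, (hm x).2⟩
  have hE := hsol.chainEnergy_grad_le hKr hKp hrr0 hrr1 hm0 (fun x => (hm x).1) hmb (by omega)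
    hr0 hp0 s
  have hr := fun {x x' : ℕ} => abs_sub_le_of_chainEnergy_grad_le (x := x) (x' := x') hm' hE
  have hv := fun {x x' : ℕ} =>
    abs_velocity_sub_le_of_chainEnergy_grad_le (x := x) (x' := x') (fun x => (hm' x).1.le) hE
  have hp : ∀ x, 1 ≤ x → x ≤ N → |p s x| ≤ Cp := fun x =>
    abs_le_of_abs_sum_le_of_velocity_sub_le hm0 hm
      (fun x x' hx1 hxx' hx'N => (hv hx1 hxx' hx'N).trans
        (mul_le_of_le_one_right (Real.sqrt_nonneg _) (sqrt_sub_div_le_one hx'N)))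
      (hsol.abs_sum_p_le hm' hmb hMp hp0 s)
  refine ⟨fun x x' hx1 hxx' hx'N => ⟨fun _ => (hr hxx' hx'N).trans ?_,
    (hv hx1 hxx' hx'N).trans ?_⟩,
    fun x hx1 hxN => ⟨?_, (hp x hx1 hxN).trans (le_max_right _ _)⟩⟩
  · exact mul_le_mul_of_nonneg_right ((le_max_left _ _).trans (le_max_left _ _)) (by positivity)
  · exact mul_le_mul_of_nonneg_right ((le_max_right _ _).trans (le_max_left _ _)) (by positivity)
  · calc |r s x| = |r s x - r s 0| := by rw [hsol.1, sub_zero]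
      _ ≤ √(mplus * C₀) * √(((x : ℝ) - (0 : ℕ)) / N) := hr (Nat.zero_le x) hxN
      _ ≤ √(mplus * C₀) := mul_le_of_le_one_right (by positivity) (sqrt_sub_div_le_one hxN)
      _ ≤ _ := (le_max_left _ _).trans (le_max_left _ _)

/-- uniform Hölder-1/2 regularity and uniform boundedness of the averaged
fields `r̄` and `p̄/m`, uniformly in `N`, in the mass configuration and in time. -/
theorem stmt2 (β rr pp : ℝ → ℝ)
    (hβc : ContinuousOn β (Set.Icc 0 1)) (hβpos : ∀ y ∈ Set.Icc (0:ℝ) 1, 0 < β y)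
    (hrrc : ContDiffOn ℝ 1 rr (Set.Icc 0 1)) (hrr0 : rr 0 = 0) (hrr1 : rr 1 = 0)
    (hppc : ContDiffOn ℝ 1 pp (Set.Icc 0 1))
    (mminus mplus mbar : ℝ) (hm0 : 0 < mminus) (hmm : mminus ≤ mplus) (hmb : 0 < mbar) :
    ∃ C : ℝ, ∀ N : ℕ, 2 ≤ N → ∀ m : ℕ → ℝ,
      (∀ x : ℕ, m x ∈ Set.Icc mminus mplus) →
      ∀ r p : ℝ → ℕ → ℝ, IsChainSolution N m r p →
      (∀ x : ℕ, 1 ≤ x → x ≤ N - 1 → r 0 x = rr ((x : ℝ) / N)) →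
      (∀ x : ℕ, 1 ≤ x → x ≤ N → p 0 x = m x * pp ((x : ℝ) / N) / mbar) →
      ∀ s : ℝ, 0 ≤ s →
        (∀ x x' : ℕ, 1 ≤ x → x ≤ x' → x' ≤ N →
          ((x' ≤ N - 1 →
            |r s x' - r s x| ≤ C * Real.sqrt (((x' : ℝ) - (x : ℝ)) / N)) ∧
           |p s x' / m x' - p s x / m x| ≤ C * Real.sqrt (((x' : ℝ) - (x : ℝ)) / N))) ∧
        (∀ x : ℕ, 1 ≤ x → x ≤ N → |r s x| ≤ C ∧ |p s x| ≤ C) :=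
  stmt2_general rr pp hrrc hrr0 hrr1 hppc mminus mplus mbar hm0 hmb
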